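/- arXiv:1104.1756 — 2 statements merged into one kernel-verified Lean document; each statement's English description precedes it below -/
import Mathlib

section
/- For every natural number n ≥ 1 the following two identities hold in the field ℚ(X,Z) of rational functions: ∑_{I ⊆ {1,…,n−1}} binom(n,I)_{X^{−1}} · ∏_{i ∈ I} gp((X^{i}·Z)^{n−i}) = (1 − Z^n)/(Z; X)_n = ∑_{I ⊆ {1,…,n−1}} binom(n,I)_{X^{−1}} · ∏_{i ∈ I} gp((X^{n−i}·Z)^{i}). -/
/-!
STATEMENT 1: Proposition `pro:multinomial A` — the two identities for 𝒜_n(X,Z) in ℚ(X,Z).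
-/

noncomputable section

open scoped Classical

/-- The Pochhammer symbol `(A; X)_k = ∏_{i=0}^{k-1} (1 - A·X^i)`. -/
def qPoch {F : Type*} [CommRing F] (A X : F) (k : ℕ) : F :=
  ∏ i ∈ Finset.range k, (1 - A * X ^ i)

/-- `(N)_X! = ∏_{k=1}^{N} (1 - X^k)`, with `(0)_X! = 1`. -/
def qFact {F : Type*} [CommRing F] (X : F) (N : ℕ) : F :=
  ∏ k ∈ Finset.range N, (1 - X ^ (k + 1))

/-- The Gaussian binomial `binom(a,b)_X = (a)_X! / ((a-b)_X! · (b)_X!)`. -/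
def qBinom {F : Type*} [Field F] (X : F) (a b : ℕ) : F :=
  qFact X a / (qFact X (a - b) * qFact X b)

/-- The Gaussian multinomial `binom(n,I)_X` for `I = {i_1 < … < i_l}`. -/
def qMultinom {F : Type*} [Field F] (X : F) (n : ℕ) (I : Finset ℕ) : F :=
  (((I.sort (· ≤ ·)).zip ((I.sort (· ≤ ·)).tail ++ [n])).map
    (fun p => qBinom X p.2 p.1)).prod

/-- `gp(T) = T/(1-T)`. -/
def gp {F : Type*} [DivisionRing F] (T : F) : F := T / (1 - T)

/-- The field ℚ(X,Z). -/
abbrev F2 : Type := FractionRing (MvPolynomial (Fin 2) ℚ)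

def XX : F2 := algebraMap (MvPolynomial (Fin 2) ℚ) F2 (MvPolynomial.X 0)
def ZZ : F2 := algebraMap (MvPolynomial (Fin 2) ℚ) F2 (MvPolynomial.X 1)


/-!
Splitting off the largest element `m` of `I` and using
`binom(n, I ∪ {m}) = binom(n, m) · binom(m, I)`, the inner sum of the second identity is the same
sum for `m` with `Z` replaced by `X^(n-m) Z`. By strong induction on `n`, the second identity thus
reduces to the `q`-binomial identity `∑_m binom(n, m)_X Y^m (Y; X)_(n-m) = 1`, once
`binom(n, m)_{X⁻¹} X^(m(n-m)) = binom(n, m)_X` is used. The reflection `I ↦ n - I` reverses the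
gaps `μ_j`, hence preserves `binom(n, I)`, and turns the first sum into the second.
-/

open Finset

section QAnalogues

variable {F : Type*} [Field F]

lemma qFact_zero (q : F) : qFact q 0 = 1 :=
  prod_range_zero _

lemma qFact_succ (q : F) (n : ℕ) : qFact q (n + 1) = qFact q n * (1 - q ^ (n + 1)) :=
  prod_range_succ _ _

lemma qPoch_zero (A X : F) : qPoch A X 0 = 1 :=
  prod_range_zero _

lemma qPoch_add (A X : F) (a b : ℕ) :
    qPoch A X (a + b) = qPoch A X a * qPoch (A * X ^ a) X b := by
  simp only [qPoch, prod_range_add, pow_add, mul_assoc]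

lemma qPoch_succ_eq_one_sub_mul (A X : F) (k : ℕ) :
    qPoch A X (k + 1) = (1 - A) * qPoch (X * A) X k := by
  rw [add_comm, qPoch_add, mul_comm X A, pow_one, qPoch, prod_range_one, pow_zero, mul_one]

lemma one_sub_pow_ne_zero {q : F} (hq : ¬IsOfFinOrder q) {k : ℕ} (hk : k ≠ 0) :
    1 - q ^ k ≠ 0 :=
  sub_ne_zero.2 fun h => hq (isOfFinOrder_iff_pow_eq_one.2 ⟨k, Nat.pos_of_ne_zero hk, h.symm⟩)

lemma not_isOfFinOrder_inv {q : F} (hq : ¬IsOfFinOrder q) : ¬IsOfFinOrder q⁻¹ := by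
  simp only [isOfFinOrder_iff_pow_eq_one, inv_pow, inv_eq_one] at hq ⊢
  exact hq

lemma qFact_ne_zero {q : F} (hq : ¬IsOfFinOrder q) (k : ℕ) : qFact q k ≠ 0 :=
  prod_ne_zero_iff.2 fun j _ => one_sub_pow_ne_zero hq j.succ_ne_zero

lemma qPoch_ne_zero {q W : F} (hW : ∀ a, ¬IsOfFinOrder (q ^ a * W)) (n : ℕ) :
    qPoch W q n ≠ 0 :=
  prod_ne_zero_iff.2 fun i _ => by
    simpa [mul_comm] using one_sub_pow_ne_zero (hW i) one_ne_zero

lemma not_isOfFinOrder_pow_mul_pow_mul {q W : F} (hW : ∀ a, ¬IsOfFinOrder (q ^ a * W))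
    (b a : ℕ) :
    ¬IsOfFinOrder (q ^ a * (q ^ b * W)) := by
  simpa only [← mul_assoc, ← pow_add] using hW (a + b)

lemma qBinom_zero_right {q : F} (hq : ¬IsOfFinOrder q) (n : ℕ) : qBinom q n 0 = 1 := by
  rw [qBinom, Nat.sub_zero, qFact_zero, mul_one, div_self (qFact_ne_zero hq n)]

lemma qBinom_self {q : F} (hq : ¬IsOfFinOrder q) (n : ℕ) : qBinom q n n = 1 := by
  rw [qBinom, Nat.sub_self, qFact_zero, one_mul, div_self (qFact_ne_zero hq n)]

lemma qBinom_succ_left {q : F} (hq : ¬IsOfFinOrder q) {n m : ℕ} (h1 : 1 ≤ m) (h2 : m ≤ n) :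
    qBinom q (n + 1) m = q ^ m * qBinom q n m + qBinom q n (m - 1) := by
  obtain ⟨k, rfl⟩ := Nat.exists_eq_add_of_le h2
  obtain ⟨j, rfl⟩ := Nat.exists_eq_add_of_le' h1
  rw [qBinom, qBinom, qBinom, show j + 1 + k + 1 - (j + 1) = k + 1 by omega,
    show j + 1 + k - (j + 1) = k by omega, show j + 1 + k - (j + 1 - 1) = k + 1 by omega,
    Nat.add_sub_cancel, qFact_succ q (j + 1 + k), qFact_succ q k, qFact_succ q j]
  have := qFact_ne_zero hq
  have := one_sub_pow_ne_zero hq (Nat.add_one_ne_zero k)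
  have := one_sub_pow_ne_zero hq (Nat.add_one_ne_zero j)
  field_simp
  ring

theorem sum_range_qBinom_mul_pow_mul_qPoch {q : F} (hq : ¬IsOfFinOrder q) (n : ℕ) (Y : F) :
    ∑ m ∈ range (n + 1), qBinom q n m * Y ^ m * qPoch Y q (n - m) = 1 := by
  induction n generalizing Y with
  | zero => simp [qBinom_self hq, qPoch_zero]
  | succ n ih =>
    have hY : ∑ i ∈ range n, qBinom q n i * Y ^ i * qPoch Y q (n - i) = 1 - Y ^ n := by
      rw [← ih Y, sum_range_succ, qBinom_self hq, Nat.sub_self, qPoch_zero]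
      ring
    have hqY :
        ∑ i ∈ range n, qBinom q n (i + 1) * (q * Y) ^ (i + 1) * qPoch (q * Y) q (n - (i + 1))
        = 1 - qPoch (q * Y) q n := by
      rw [← ih (q * Y), sum_range_succ', qBinom_zero_right hq, pow_zero, Nat.sub_zero]
      ring
    have hterm : ∀ i ∈ range n,
        qBinom q (n + 1) (i + 1) * Y ^ (i + 1) * qPoch Y q (n + 1 - (i + 1))
          = (1 - Y) * (qBinom q n (i + 1) * (q * Y) ^ (i + 1) * qPoch (q * Y) q (n - (i + 1)))
            + Y * (qBinom q n i * Y ^ i * qPoch Y q (n - i)) := by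
      intro i hi
      have hni : n - i = n - (i + 1) + 1 := by have := mem_range.1 hi; omega
      rw [qBinom_succ_left hq (by omega) (by simpa using hi), Nat.add_sub_cancel,
        Nat.add_sub_add_right, hni, qPoch_succ_eq_one_sub_mul]
      ring
    rw [sum_range_succ, sum_range_succ', sum_congr rfl hterm, sum_add_distrib, ← mul_sum,
      ← mul_sum, hY, hqY, qBinom_self hq, qBinom_zero_right hq, Nat.sub_self, Nat.sub_zero,
      qPoch_zero, qPoch_succ_eq_one_sub_mul]
    ring

lemma qFact_inv_mul {q : F} (hq0 : q ≠ 0) (k : ℕ) :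
    qFact q⁻¹ k * ∏ j ∈ range k, -q ^ (j + 1) = qFact q k := by
  rw [qFact, qFact, ← prod_mul_distrib]
  refine prod_congr rfl fun j _ => ?_
  rw [inv_pow]
  field_simp
  ring

lemma prod_range_add_neg_pow (q : F) (a b : ℕ) :
    ∏ j ∈ range (a + b), -q ^ (j + 1)
      = (∏ j ∈ range a, -q ^ (j + 1)) * (∏ j ∈ range b, -q ^ (j + 1)) * q ^ (a * b) := by
  have hshift : ∀ j, -q ^ (a + j + 1) = q ^ a * -q ^ (j + 1) := fun j => by ring
  simp only [prod_range_add, hshift, prod_mul_distrib, prod_const, card_range, ← pow_mul]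
  ring

lemma qBinom_inv_mul_pow {q : F} (hq0 : q ≠ 0) {n m : ℕ} (h : m ≤ n) :
    qBinom q⁻¹ n m * q ^ (m * (n - m)) = qBinom q n m := by
  obtain ⟨k, rfl⟩ := Nat.exists_eq_add_of_le h
  have hP : ∀ k, ∏ j ∈ range k, -q ^ (j + 1) ≠ 0 := fun k =>
    prod_ne_zero_iff.2 fun j _ => neg_ne_zero.2 (pow_ne_zero _ hq0)
  rw [Nat.add_sub_cancel_left, qBinom, qBinom, Nat.add_sub_cancel_left,
    ← qFact_inv_mul hq0 (m + k), ← qFact_inv_mul hq0 k, ← qFact_inv_mul hq0 m,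
    prod_range_add_neg_pow, mul_mul_mul_comm, mul_div_mul_comm, mul_comm (∏ j ∈ range k, _),
    mul_div_cancel_left₀ _ (mul_ne_zero (hP m) (hP k))]

end QAnalogues

section FinsetSort

variable {α β : Type*} [LinearOrder α] [LinearOrder β]

lemma Finset.sort_insert_of_forall_lt {m : α} {s : Finset α} (h : ∀ x ∈ s, x < m) :
    (insert m s).sort (· ≤ ·) = s.sort (· ≤ ·) ++ [m] := by
  have hm : m ∉ s := fun hm => lt_irrefl m (h m hm)
  refine List.Perm.eq_of_pairwise' (Finset.pairwise_sort _ _) ?_ ?_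
  · rw [List.pairwise_append]
    refine ⟨Finset.pairwise_sort _ _, List.pairwise_singleton _ _, fun x hx y hy => ?_⟩
    rw [List.mem_singleton.1 hy]
    exact (h x ((Finset.mem_sort _).1 hx)).le
  · rw [← Multiset.coe_eq_coe, Finset.sort_eq, ← Multiset.coe_add, Finset.sort_eq,
      Finset.insert_val_of_notMem hm, add_comm, Multiset.coe_singleton, Multiset.singleton_add]

lemma Finset.sort_image_of_strictAntiOn {f : α → β} {s : Finset α} (hf : StrictAntiOn f s) :
    (s.image f).sort (· ≤ ·) = ((s.sort (· ≤ ·)).map f).reverse := by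
  refine List.Perm.eq_of_pairwise' (Finset.pairwise_sort _ _) ?_ ?_
  · rw [List.pairwise_reverse, List.pairwise_map]
    exact (Finset.pairwise_sort s _).imp_of_mem fun hx hy hxy =>
      hf.antitoneOn ((Finset.mem_sort _).1 hx) ((Finset.mem_sort _).1 hy) hxy
  · rw [← Multiset.coe_eq_coe, Finset.sort_eq, Finset.image_val_of_injOn hf.injOn,
      Multiset.coe_reverse, ← Multiset.map_coe, Finset.sort_eq]

end FinsetSort

section Multinomial

variable {F : Type*} [Field F]

def qMultinomList (q : F) (n : ℕ) (l : List ℕ) : F :=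
  ((l.zip (l.tail ++ [n])).map fun p => qBinom q p.2 p.1).prod

lemma qMultinom_eq_qMultinomList (q : F) (n : ℕ) (I : Finset ℕ) :
    qMultinom q n I = qMultinomList q n (I.sort (· ≤ ·)) := rfl

lemma qMultinomList_append_singleton (q : F) (l : List ℕ) (m n : ℕ) :
    qMultinomList q n (l ++ [m]) = qMultinomList q m l * qBinom q n m := by
  cases l with
  | nil => simp [qMultinomList]
  | cons a l =>
    have htail : (a :: l ++ [m]).tail ++ [n] = ((a :: l).tail ++ [m]) ++ [n] := by simp
    rw [qMultinomList, qMultinomList, htail, List.zip_append (by simp)]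
    simp

/-- The gaps `μ_0, …, μ_l` of `[i_1, …, i_l]` inside `[0, n]`. -/
def gaps (n : ℕ) (l : List ℕ) : List ℕ :=
  List.zipWith (fun a b => b - a) (0 :: l) (l ++ [n])

lemma gaps_append_singleton (n m : ℕ) (l : List ℕ) :
    gaps n (l ++ [m]) = gaps m l ++ [n - m] := by
  rw [gaps, ← List.cons_append, List.zipWith_append (by simp)]
  rfl

lemma qMultinomList_eq_div {q : F} (hq : ¬IsOfFinOrder q) (n : ℕ) (l : List ℕ) :
    qMultinomList q n l = qFact q n / ((gaps n l).map (qFact q)).prod := by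
  induction l using List.reverseRecOn generalizing n with
  | nil => simp [qMultinomList, gaps, qFact_ne_zero hq n]
  | append_singleton l m ih =>
    have hprod : ((gaps m l).map (qFact q)).prod ≠ 0 :=
      List.prod_ne_zero fun h0 => by
        obtain ⟨k, -, hk⟩ := List.mem_map.1 h0
        exact qFact_ne_zero hq k hk
    have := qFact_ne_zero hq m
    rw [qMultinomList_append_singleton, gaps_append_singleton, ih, qBinom, List.map_append,
      List.prod_append, List.map_singleton, List.prod_singleton]
    field_simp

lemma gaps_map_sub_reverse {n : ℕ} {l : List ℕ} (h : ∀ x ∈ l, x ≤ n) :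
    gaps n (l.map (n - ·)).reverse = (gaps n l).reverse := by
  have h1 : 0 :: (l.map (n - ·)).reverse = ((l ++ [n]).map (n - ·)).reverse := by simp
  have h2 : (l.map (n - ·)).reverse ++ [n] = ((0 :: l).map (n - ·)).reverse := by simp
  rw [gaps, h1, h2, ← List.reverse_zipWith (by simp), List.zipWith_map, List.zipWith_comm, gaps,
    ← List.map_uncurry_zip_eq_zipWith, ← List.map_uncurry_zip_eq_zipWith]
  refine congrArg _ (List.map_congr_left fun p hp => ?_)
  obtain ⟨hp1, hp2⟩ := List.of_mem_zip hp
  have hp1' : p.1 ≤ n := (List.mem_cons.1 hp1).elim (fun h0 => h0 ▸ n.zero_le) (h _)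
  have hp2' : p.2 ≤ n := (List.mem_append.1 hp2).elim (h _) fun h0 => (List.mem_singleton.1 h0).le
  simp only [Function.uncurry]
  omega

lemma qMultinom_empty (q : F) (n : ℕ) : qMultinom q n ∅ = 1 := by
  simp [qMultinom_eq_qMultinomList, qMultinomList]

lemma qMultinom_insert_of_forall_lt (q : F) {n m : ℕ} {I : Finset ℕ} (h : ∀ x ∈ I, x < m) :
    qMultinom q n (insert m I) = qBinom q n m * qMultinom q m I := by
  rw [qMultinom_eq_qMultinomList, qMultinom_eq_qMultinomList, Finset.sort_insert_of_forall_lt h,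
    qMultinomList_append_singleton, mul_comm]

lemma qMultinom_image_sub {q : F} (hq : ¬IsOfFinOrder q) {n : ℕ} {I : Finset ℕ}
    (h : ∀ x ∈ I, x ≤ n) : qMultinom q n (I.image (n - ·)) = qMultinom q n I := by
  have hanti : StrictAntiOn (n - ·) (I : Set ℕ) := fun a ha b hb hab => by
    have := h b hb
    simp only
    omega
  rw [qMultinom_eq_qMultinomList, qMultinom_eq_qMultinomList,
    Finset.sort_image_of_strictAntiOn hanti, qMultinomList_eq_div hq, qMultinomList_eq_div hq,
    gaps_map_sub_reverse fun x hx => h x ((Finset.mem_sort _).1 hx), List.map_reverse,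
    List.prod_reverse]

lemma sum_powerset_Ico_qMultinom_mul_prod_sub {p : F} (hp : ¬IsOfFinOrder p) (n : ℕ)
    (g : ℕ → F) :
    ∑ I ∈ (Ico 1 n).powerset, qMultinom p n I * ∏ i ∈ I, g (n - i)
      = ∑ I ∈ (Ico 1 n).powerset, qMultinom p n I * ∏ i ∈ I, g i := by
  have hmaps : ∀ I ∈ (Ico 1 n).powerset, I.image (n - ·) ∈ (Ico 1 n).powerset := by
    intro I hI
    simp only [mem_powerset, subset_iff, mem_image, mem_Ico] at hI ⊢
    rintro _ ⟨i, hi, rfl⟩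
    have := hI hi
    omega
  have hinv : ∀ I ∈ (Ico 1 n).powerset, (I.image (n - ·)).image (n - ·) = I := by
    intro I hI
    rw [image_image]
    refine (image_congr fun i hi => ?_).trans image_id
    have := mem_Ico.1 (mem_powerset.1 hI hi)
    simp only [Function.comp_apply, id_eq]
    omega
  refine sum_nbij' (image (n - ·)) (image (n - ·)) hmaps hmaps hinv hinv fun I hI => ?_
  have hle : ∀ i ∈ I, i ≤ n := fun i hi => (mem_Ico.1 (mem_powerset.1 hI hi)).2.le
  rw [qMultinom_image_sub hp hle, prod_image fun a ha b hb hab => by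
    have := hle a ha; have := hle b hb; omega]

end Multinomial

lemma sum_powerset_Ico_eq_add_sum_insert {M : Type*} [AddCommMonoid M] (f : Finset ℕ → M)
    (n : ℕ) :
    ∑ I ∈ (Ico 1 n).powerset, f I
      = f ∅ + ∑ m ∈ Ico 1 n, ∑ I ∈ (Ico 1 m).powerset, f (insert m I) := by
  induction n with
  | zero => simp
  | succ n ih =>
    rcases Nat.eq_zero_or_pos n with rfl | hn
    · simp
    · rw [Nat.Ico_succ_right_eq_insert_Ico hn, sum_powerset_insert (by simp), ih,
        sum_insert (by simp), add_assoc, add_comm (∑ _ ∈ _, _)]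

section Identity

variable {F : Type*} [Field F] {q : F}

lemma qMultinom_insert_mul_prod_gp {n m : ℕ} (hmn : m ≤ n) {I : Finset ℕ} (hI : I ⊆ Ico 1 m)
    (W : F) :
    qMultinom q⁻¹ n (insert m I) * ∏ i ∈ insert m I, gp ((q ^ (n - i) * W) ^ i)
      = qBinom q⁻¹ n m * gp ((q ^ (n - m) * W) ^ m)
        * (qMultinom q⁻¹ m I * ∏ i ∈ I, gp ((q ^ (m - i) * (q ^ (n - m) * W)) ^ i)) := by
  have hIm : ∀ x ∈ I, x < m := fun x hx => (mem_Ico.1 (hI hx)).2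
  have hshift : ∀ i ∈ I, q ^ (n - i) * W = q ^ (m - i) * (q ^ (n - m) * W) := fun i hi => by
    rw [← mul_assoc, ← pow_add, add_comm, Nat.sub_add_sub_cancel hmn (hIm i hi).le]
  rw [qMultinom_insert_of_forall_lt _ hIm, prod_insert fun hm => lt_irrefl m (hIm m hm),
    prod_congr rfl fun i hi => congrArg (fun T => gp (T ^ i)) (hshift i hi)]
  ring

lemma qBinom_inv_mul_gp_mul_div_qPoch (hq0 : q ≠ 0) {W : F}
    (hW : ∀ a, ¬IsOfFinOrder (q ^ a * W)) {n m : ℕ} (hm : m ≠ 0) (hmn : m ≤ n) :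
    qBinom q⁻¹ n m * gp ((q ^ (n - m) * W) ^ m)
        * ((1 - (q ^ (n - m) * W) ^ m) / qPoch (q ^ (n - m) * W) q m)
      = qBinom q n m * W ^ m * qPoch W q (n - m) / qPoch W q n := by
  have hsplit : qPoch W q n = qPoch W q (n - m) * qPoch (q ^ (n - m) * W) q m := by
    rw [mul_comm (q ^ _), ← qPoch_add, Nat.sub_add_cancel hmn]
  have hV : (q ^ (n - m) * W) ^ m = q ^ (m * (n - m)) * W ^ m := by
    rw [mul_pow, ← pow_mul, mul_comm m]
  have h1 := one_sub_pow_ne_zero (hW (n - m)) hm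
  have h2 := qPoch_ne_zero hW (n - m)
  have h3 := qPoch_ne_zero (not_isOfFinOrder_pow_mul_pow_mul hW (n - m)) m
  rw [← qBinom_inv_mul_pow hq0 hmn, hsplit, gp]
  field_simp
  rw [hV]
  ring

theorem sum_qMultinom_mul_prod_gp (hq0 : q ≠ 0) (hq : ¬IsOfFinOrder q) {n : ℕ} (hn : 1 ≤ n)
    {W : F} (hW : ∀ a, ¬IsOfFinOrder (q ^ a * W)) :
    ∑ I ∈ (Ico 1 n).powerset, qMultinom q⁻¹ n I * ∏ i ∈ I, gp ((q ^ (n - i) * W) ^ i)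
      = (1 - W ^ n) / qPoch W q n := by
  induction n using Nat.strong_induction_on generalizing W with
  | _ n ih =>
    have hterm : ∀ m ∈ Ico 1 n,
        ∑ I ∈ (Ico 1 m).powerset,
            qMultinom q⁻¹ n (insert m I) * ∏ i ∈ insert m I, gp ((q ^ (n - i) * W) ^ i)
          = qBinom q n m * W ^ m * qPoch W q (n - m) / qPoch W q n := by
      intro m hm
      obtain ⟨hm1, hmn⟩ := mem_Ico.1 hm
      rw [sum_congr rfl fun I hI => qMultinom_insert_mul_prod_gp hmn.le (mem_powerset.1 hI) W,
        ← mul_sum, ih m hmn hm1 (not_isOfFinOrder_pow_mul_pow_mul hW (n - m)),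
        qBinom_inv_mul_gp_mul_div_qPoch hq0 hW (by omega) hmn.le]
    have hbinom := sum_range_qBinom_mul_pow_mul_qPoch hq n W
    rw [range_eq_Ico, sum_eq_sum_Ico_succ_bot (by omega), sum_Ico_succ_top hn, qBinom_zero_right hq,
      qBinom_self hq, Nat.sub_zero, Nat.sub_self, qPoch_zero] at hbinom
    -- the terms `m = 0` and `m = n` of the `q`-binomial identity are `(W; q)_n` and `W ^ n`
    have := qPoch_ne_zero hW n
    rw [sum_powerset_Ico_eq_add_sum_insert, qMultinom_empty, prod_empty, mul_one,
      sum_congr rfl hterm, ← sum_div]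
    field_simp
    linear_combination hbinom

end Identity

lemma XX_pow_mul_ZZ_pow_ne_one {a b : ℕ} (h : a + b ≠ 0) : XX ^ a * ZZ ^ b ≠ 1 := by
  intro hab
  have hpoly : (MvPolynomial.X 0 : MvPolynomial (Fin 2) ℚ) ^ a * MvPolynomial.X 1 ^ b = 1 :=
    IsFractionRing.injective (MvPolynomial (Fin 2) ℚ) F2 (by simpa [XX, ZZ] using hab)
  have h2 := congrArg (MvPolynomial.eval fun _ => (2 : ℚ)) hpoly
  simp only [map_mul, map_pow, MvPolynomial.eval_X, map_one, ← pow_add] at h2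
  exact (one_lt_pow₀ one_lt_two h).ne' h2

lemma XX_ne_zero : XX ≠ 0 :=
  (map_ne_zero_iff _ (IsFractionRing.injective _ _)).2 (MvPolynomial.X_ne_zero 0)

lemma not_isOfFinOrder_XX : ¬IsOfFinOrder XX := by
  rw [isOfFinOrder_iff_pow_eq_one]
  rintro ⟨k, hk, h⟩
  exact XX_pow_mul_ZZ_pow_ne_one (a := k) (b := 0) hk.ne' (by simpa using h)

lemma not_isOfFinOrder_XX_pow_mul_ZZ (a : ℕ) : ¬IsOfFinOrder (XX ^ a * ZZ) := by
  rw [isOfFinOrder_iff_pow_eq_one]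
  rintro ⟨k, hk, h⟩
  exact XX_pow_mul_ZZ_pow_ne_one (a := a * k) (b := k) (by omega)
    (by rwa [mul_pow, ← pow_mul] at h)

theorem multinomial_type_identity_A (n : ℕ) (hn : 1 ≤ n) :
    (∑ I ∈ (Finset.Ico 1 n).powerset,
        qMultinom XX⁻¹ n I * ∏ i ∈ I, gp ((XX ^ i * ZZ) ^ (n - i))
      = (1 - ZZ ^ n) / qPoch ZZ XX n) ∧
    (∑ I ∈ (Finset.Ico 1 n).powerset,
        qMultinom XX⁻¹ n I * ∏ i ∈ I, gp ((XX ^ (n - i) * ZZ) ^ i)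
      = (1 - ZZ ^ n) / qPoch ZZ XX n) := by
  have hsecond := sum_qMultinom_mul_prod_gp XX_ne_zero not_isOfFinOrder_XX hn
    not_isOfFinOrder_XX_pow_mul_ZZ
  refine ⟨?_, hsecond⟩
  calc _ = ∑ I ∈ (Ico 1 n).powerset,
          qMultinom XX⁻¹ n I * ∏ i ∈ I, gp ((XX ^ (n - (n - i)) * ZZ) ^ (n - i)) :=
        sum_congr rfl fun I hI => congrArg _ <| prod_congr rfl fun i hi => by
          rw [Nat.sub_sub_self (mem_Ico.1 (mem_powerset.1 hI hi)).2.le]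
    _ = _ := sum_powerset_Ico_qMultinom_mul_prod_sub (not_isOfFinOrder_inv not_isOfFinOrder_XX) n
        fun i => gp ((XX ^ (n - i) * ZZ) ^ i)
    _ = _ := hsecond

end
end

section
/- Let q be a prime power, F_q the finite field with q elements, n ≥ 1, δ ∈ {0,1} and i ∈ {0,1,…,n}. Then the number of alternating (2n+δ) × (2n+δ) matrices x over F_q (i.e. xᵀ = −x and all diagonal entries of x are zero) of rank exactly 2(n−i) satisfies, as an equality of rational numbers, #{x} = binom(n,i)_{q^{−2}} · (q^{−2(i+δ)−1}; q^{−2})_{n−i} · q^{C(2n+δ,2) − C(2i+δ,2)}, where C(a,2) = a(a−1)/2. -/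
/-!
Write an alternating `(N+1) × (N+1)` matrix as the border `[[y, v], [-vᵀ, 0]]` of an
alternating `N × N` matrix `y`. Because `w ⬝ᵥ y *ᵥ w = 0`, bordering keeps the rank when
`v ∈ range y` and raises it by two otherwise. Counting the `q ^ rank y` vectors in the range and
the `q ^ N - q ^ rank y` outside it gives, for the number `a N k` of alternating `N × N` matrices
of rank `k`, the recursion `a (N+1) (k+2) = q^(k+2) a N (k+2) + (q^N - q^k) a N k`.
The classical closed form `a N (2r) = q^(r(r-1)) ∏_{j<2r} (q^(N-j) - 1) / ∏_{k=1}^{r} (q^(2k) - 1)`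
satisfies the same recursion. Rewritten in powers of `q⁻¹`, the factors of
`∏_{j<2r} (q^(N-j) - 1)` with even exponent give the Gaussian binomial and those with odd exponent
the Pochhammer symbol.
-/

noncomputable section

open scoped Classical

open Matrix Finset

namespace Matrix

section Alternating

variable {ι κ R : Type*}

-- The zero diagonal is not implied by `xᵀ = -x` in characteristic two.
def IsAlt [Neg R] [Zero R] (x : Matrix ι ι R) : Prop :=
  xᵀ = -x ∧ ∀ j, x j j = 0

theorem IsAlt.apply_swap [Neg R] [Zero R] {x : Matrix ι ι R} (hx : x.IsAlt) (i j : ι) :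
    x j i = -x i j :=
  congrFun (congrFun hx.1 i) j

theorem IsAlt.submatrix [Neg R] [Zero R] {x : Matrix ι ι R} (hx : x.IsAlt) (e : κ → ι) :
    (x.submatrix e e).IsAlt :=
  ⟨by rw [transpose_submatrix, hx.1]; rfl, fun j => hx.2 (e j)⟩

def border [Neg R] [Zero R] (y : Matrix ι ι R) (v : ι → R) :
    Matrix (ι ⊕ Fin 1) (ι ⊕ Fin 1) R :=
  fromBlocks y (replicateCol (Fin 1) v) (-replicateRow (Fin 1) v) 0

variable [CommRing R] {y : Matrix ι ι R}

theorem isAlt_border (hy : y.IsAlt) (v : ι → R) : (border y v).IsAlt := by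
  refine ⟨?_, ?_⟩
  · rw [border, fromBlocks_transpose, hy.1, fromBlocks_neg]
    simp
  · rintro (j | j)
    · exact hy.2 j
    · rfl

theorem IsAlt.border_toBlocks₁₁ {x : Matrix (ι ⊕ Fin 1) (ι ⊕ Fin 1) R} (hx : x.IsAlt) :
    border x.toBlocks₁₁ (fun i => x (Sum.inl i) (Sum.inr 0)) = x := by
  ext (i | i) (j | j)
  · rfl
  · simp [border, Fin.fin_one_eq_zero j]
  · simp [border, Fin.fin_one_eq_zero i, hx.apply_swap (Sum.inl j)]
  · simp [border, Fin.fin_one_eq_zero i, Fin.fin_one_eq_zero j, hx.2]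

variable [Fintype ι]

theorem vecMul_eq_neg_mulVec_of_transpose_eq_neg (hy : yᵀ = -y) (w : ι → R) :
    w ᵥ* y = -(y *ᵥ w) := by
  rw [← mulVec_transpose, hy, neg_mulVec]

theorem IsAlt.dotProduct_mulVec_self (hy : y.IsAlt) (w : ι → R) : w ⬝ᵥ (y *ᵥ w) = 0 := by
  simp only [dotProduct, mulVec, Finset.mul_sum, ← Finset.sum_product']
  refine sum_involution (fun p _ => p.swap) (fun p _ => ?_) (fun p _ hp hswap => ?_)
    (by simp) (by simp)
  · simp only [Prod.fst_swap, Prod.snd_swap, hy.apply_swap p.1 p.2]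
    ring
  · have : p.1 = p.2 := congrArg Prod.snd hswap
    exact hp (by simp [this, hy.2])

theorem border_mulVec_sumElim (y : Matrix ι ι R) (v z : ι → R) (t : R) :
    border y v *ᵥ Sum.elim z (fun _ => t) = Sum.elim (y *ᵥ z + t • v) (fun _ => -(v ⬝ᵥ z)) := by
  ext (i | i) <;> simp [border, mulVec, dotProduct, mul_comm]

end Alternating

theorem rank_eq_zero_iff {m n F : Type*} [Fintype n] [Field F] {x : Matrix m n F} :
    x.rank = 0 ↔ x = 0 := by
  rw [rank, Submodule.finrank_eq_zero, LinearMap.range_eq_bot, ext_iff_mulVec, LinearMap.ext_iff]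
  simp

section Rank

variable {k l m n F : Type*} [Field F] [Fintype l] [Fintype m] [Fintype n]

theorem rank_mul_mul_of_mul_eq_one (A : Matrix m n F) {L : Matrix k m F} {L' : Matrix m k F}
    {R : Matrix n l F} {R' : Matrix l n F} [Fintype k] (hL : L' * L = 1) (hR : R * R' = 1) :
    (L * A * R).rank = A.rank := by
  refine le_antisymm ((rank_mul_le_left _ _).trans (rank_mul_le_right _ _)) ?_
  calc A.rank = (L' * (L * A * R) * R').rank := by
        simp only [Matrix.mul_assoc, hR, Matrix.mul_one, ← Matrix.mul_assoc L' L, hL,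
          Matrix.one_mul]
    _ ≤ (L * A * R).rank := (rank_mul_le_left _ _).trans (rank_mul_le_right _ _)

theorem exists_vecMul_eq_zero_dotProduct_ne_zero (A : Matrix m n F) {v : m → F}
    (hv : v ∉ LinearMap.range A.mulVecLin) : ∃ u, u ᵥ* A = 0 ∧ u ⬝ᵥ v ≠ 0 := by
  obtain ⟨f, hfv, hle⟩ := Submodule.exists_le_ker_of_notMem hv
  have hf : ∀ x, (dotProductEquiv F m).symm f ⬝ᵥ x = f x := fun x => by
    rw [← dotProductEquiv_apply_apply, LinearEquiv.apply_symm_apply]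
  refine ⟨(dotProductEquiv F m).symm f, dotProduct_eq_zero _ fun z => ?_, by rwa [hf]⟩
  rw [← dotProduct_mulVec, hf]
  exact hle ⟨z, rfl⟩

variable {y : Matrix n n F}

theorem IsAlt.border_mulVec_eq (hy : y.IsAlt) (w : n → F) :
    border y (y *ᵥ w) = fromRows 1 (replicateRow (Fin 1) w) * y *
      fromCols 1 (replicateCol (Fin 1) w) := by
  have hrow : replicateRow (Fin 1) w * y = -replicateRow (Fin 1) (y *ᵥ w) := by
    rw [← replicateRow_vecMul, vecMul_eq_neg_mulVec_of_transpose_eq_neg hy.1]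
    rfl
  have hcorner : replicateRow (Fin 1) w * y * replicateCol (Fin 1) w = 0 := by
    rw [Matrix.mul_assoc, ← replicateCol_mulVec, replicateRow_mul_replicateCol,
      hy.dotProduct_mulVec_self]
    rfl
  rw [fromRows_mul, fromRows_mul_fromCols, hcorner, hrow, border, replicateCol_mulVec]
  simp

theorem IsAlt.rank_border_mulVec (hy : y.IsAlt) (w : n → F) :
    (border y (y *ᵥ w)).rank = y.rank := by
  rw [hy.border_mulVec_eq, rank_mul_mul_of_mul_eq_one (L' := fromCols 1 0) (R' := fromRows 1 0)]
  · simp [fromCols_mul_fromRows]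
  · simp [fromCols_mul_fromRows]

theorem rank_border_of_notMem_range (hy : yᵀ = -y) {v : n → F}
    (hv : v ∉ LinearMap.range y.mulVecLin) : (border y v).rank = y.rank + 2 := by
  obtain ⟨u, hu, huv⟩ := exists_vecMul_eq_zero_dotProduct_ne_zero y hv
  rw [vecMul_eq_neg_mulVec_of_transpose_eq_neg hy, neg_eq_zero] at hu
  -- The range is `(range y ⊔ F ∙ v) × F`: its last coordinate is free since `y *ᵥ u = 0` while
  -- `v ⬝ᵥ u ≠ 0`.
  set W := LinearMap.range y.mulVecLin ⊔ (F ∙ v)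
  let f : W × (Fin 1 → F) →ₗ[F] (n ⊕ Fin 1 → F) :=
    (LinearEquiv.sumArrowLequivProdArrow n (Fin 1) F F).symm.toLinearMap ∘ₗ
      W.subtype.prodMap LinearMap.id
  have hf : Function.Injective f := by
    simp only [f, LinearMap.coe_comp, LinearEquiv.coe_coe, LinearMap.coe_prodMap,
      Submodule.coe_subtype, LinearMap.id_coe]
    exact (LinearEquiv.injective _).comp (Subtype.val_injective.prodMap Function.injective_id)
  have hrange : LinearMap.range (border y v).mulVecLin = LinearMap.range f := by
    ext m
    constructor
    · rintro ⟨x, rfl⟩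
      obtain ⟨z, t, rfl⟩ : ∃ z t, x = Sum.elim z (fun _ => t) :=
        ⟨x ∘ Sum.inl, x (Sum.inr 0), by ext (i | i) <;> simp [Fin.fin_one_eq_zero]⟩
      refine ⟨(⟨y *ᵥ z + t • v, Submodule.add_mem_sup ⟨z, rfl⟩
        (Submodule.smul_mem _ _ (Submodule.mem_span_singleton_self v))⟩, fun _ => -(v ⬝ᵥ z)), ?_⟩
      simp only [mulVecLin_apply, border_mulVec_sumElim]
      rfl
    · rintro ⟨⟨⟨a, ha⟩, b⟩, rfl⟩
      obtain ⟨_, ⟨z, rfl⟩, _, hc, rfl⟩ := Submodule.mem_sup.mp ha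
      obtain ⟨c, rfl⟩ := Submodule.mem_span_singleton.mp hc
      refine ⟨Sum.elim (z + ((-(v ⬝ᵥ z) - b 0) / (v ⬝ᵥ u)) • u) (fun _ => c), ?_⟩
      rw [dotProduct_comm] at huv
      rw [mulVecLin_apply, border_mulVec_sumElim]
      ext (i | i)
      · simp [mulVec_add, mulVec_smul, hu, f]
      · simp [f, Fin.fin_one_eq_zero i, dotProduct_add, dotProduct_smul]
        field_simp
        ring
  rw [rank, hrange, LinearMap.finrank_range_of_inj hf, Module.finrank_prod,
    Submodule.finrank_sup_span_singleton hv, Module.finrank_fin_fun]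
  rfl

theorem IsAlt.rank_border (hy : y.IsAlt) (v : n → F) :
    (border y v).rank = if v ∈ LinearMap.range y.mulVecLin then y.rank else y.rank + 2 := by
  split_ifs with hv
  · obtain ⟨w, rfl⟩ := hv
    exact hy.rank_border_mulVec w
  · exact rank_border_of_notMem_range hy.1 hv

end Rank

section Counting

variable {ι κ F : Type*} [Fintype ι] [Fintype κ] [DecidableEq ι] [Field F] [Fintype F]

theorem card_mem_range_mulVecLin (y : Matrix ι κ F) :
    #{v | v ∈ LinearMap.range y.mulVecLin} = Fintype.card F ^ y.rank := by
  rw [← Fintype.card_subtype, rank]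
  exact Module.card_eq_pow_finrank

theorem card_notMem_range_mulVecLin (y : Matrix ι κ F) :
    #{v | v ∉ LinearMap.range y.mulVecLin} =
      Fintype.card F ^ Fintype.card ι - Fintype.card F ^ y.rank := by
  rw [filter_not, card_sdiff_of_subset (filter_subset _ _), card_mem_range_mulVecLin, card_univ,
    Fintype.card_fun]

theorem IsAlt.card_rank_border_eq_add_two {y : Matrix ι ι F} (hy : y.IsAlt) (k : ℕ) :
    #{v | (border y v).rank = k + 2} =
      (if y.rank = k + 2 then Fintype.card F ^ (k + 2) else 0) +
      (if y.rank = k then Fintype.card F ^ Fintype.card ι - Fintype.card F ^ k else 0) := by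
  simp only [hy.rank_border]
  by_cases h2 : y.rank = k + 2
  · rw [if_pos h2, if_neg (by omega), add_zero, ← h2, ← card_mem_range_mulVecLin y]
    exact congrArg card (filter_congr fun v _ => by split_ifs <;> simp_all)
  by_cases h0 : y.rank = k
  · rw [if_neg h2, if_pos h0, zero_add, ← h0, ← card_notMem_range_mulVecLin y]
    exact congrArg card (filter_congr fun v _ => by split_ifs <;> simp_all)
  · rw [if_neg h2, if_neg h0, card_eq_zero, filter_eq_empty_iff]
    intro v _
    split_ifs <;> omega

theorem card_isAlt_rank_sumFinOne (k : ℕ) :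
    #{x : Matrix (ι ⊕ Fin 1) (ι ⊕ Fin 1) F | x.IsAlt ∧ x.rank = k} =
      ∑ y : Matrix ι ι F with y.IsAlt, #{v | (border y v).rank = k} := by
  calc _ = #{p : Matrix ι ι F × (ι → F) | p.1.IsAlt ∧ (border p.1 p.2).rank = k} := by
        refine card_bij' (fun x _ => (x.toBlocks₁₁, fun i => x (Sum.inl i) (Sum.inr 0)))
          (fun p _ => border p.1 p.2) ?_ ?_ ?_ ?_
        all_goals simp only [mem_filter, mem_univ, true_and]
        · exact fun x hx => ⟨hx.1.submatrix _, by rw [hx.1.border_toBlocks₁₁, hx.2]⟩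
        · exact fun p hp => ⟨isAlt_border hp.1 _, hp.2⟩
        · exact fun x hx => hx.1.border_toBlocks₁₁
        · intro p _
          rfl
    _ = _ := by
      rw [card_filter, Fintype.sum_prod_type, sum_filter]
      refine sum_congr rfl fun y _ => ?_
      rw [card_filter]
      split_ifs with hy <;> simp [hy]

variable [DecidableEq κ]

theorem card_isAlt_rank_reindex (e : ι ≃ κ) (k : ℕ) :
    #{x : Matrix ι ι F | x.IsAlt ∧ x.rank = k} = #{x : Matrix κ κ F | x.IsAlt ∧ x.rank = k} := by
  refine card_bij' (fun x _ => reindex e e x) (fun x _ => reindex e.symm e.symm x) ?_ ?_ ?_ ?_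
  all_goals simp only [mem_filter, mem_univ, true_and, reindex_apply, rank_submatrix]
  · exact fun x hx => ⟨hx.1.submatrix _, hx.2⟩
  · exact fun x hx => ⟨hx.1.submatrix _, hx.2⟩
  · simp
  · simp

end Counting

end Matrix

theorem Nat.succ_choose_two (n : ℕ) : (n + 1).choose 2 = n.choose 2 + n := by
  rw [Nat.choose_succ_succ', Nat.choose_one_right, add_comm]

theorem Nat.add_two_mul_choose_two (M r : ℕ) :
    (M + 2 * r).choose 2 = M.choose 2 + (2 * M + 1) * r + 4 * r.choose 2 := by
  induction r with
  | zero => simp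
  | succ s ih =>
    rw [show M + 2 * (s + 1) = M + 2 * s + 1 + 1 by ring, Nat.succ_choose_two,
      Nat.succ_choose_two, ih, Nat.succ_choose_two]
    ring

section QProducts

variable {K : Type*}

theorem qPoch_self [CommRing K] (X : K) (r : ℕ) : qPoch X X r = qFact X r := by
  simp only [qPoch, qFact, pow_succ']

theorem qFact_add [CommRing K] (X : K) (a b : ℕ) :
    qFact X (a + b) = qFact X a * qPoch (X ^ (a + 1)) X b := by
  simp only [qFact, qPoch, prod_range_add, ← pow_add]
  congr 2 with k
  ring_nf

theorem qBinom_add_left [Field K] {X : K} {a : ℕ} (ha : qFact X a ≠ 0) (b : ℕ) :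
    qBinom X (a + b) a = qPoch (X ^ (a + 1)) X b / qFact X b := by
  rw [qBinom, qFact_add, Nat.add_sub_cancel_left]
  field_simp

def prodPowSubOne [CommRing K] (q : K) (a c r : ℕ) : K :=
  ∏ k ∈ range r, (q ^ (a + c * k) - 1)

theorem prodPowSubOne_succ [CommRing K] (q : K) (a c r : ℕ) :
    prodPowSubOne q a c (r + 1) = prodPowSubOne q a c r * (q ^ (a + c * r) - 1) :=
  prod_range_succ _ _

theorem prodPowSubOne_succ' [CommRing K] (q : K) (a c r : ℕ) :
    prodPowSubOne q a c (r + 1) = (q ^ a - 1) * prodPowSubOne q (a + c) c r := by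
  rw [prodPowSubOne, prod_range_succ', mul_comm, mul_zero, add_zero, prodPowSubOne]
  congr 2 with k
  ring_nf

theorem prodPowSubOne_mul_pow_add_sub_one [CommRing K] (q : K) (a r : ℕ) :
    prodPowSubOne q a 1 r * (q ^ (a + r) - 1) = (q ^ a - 1) * prodPowSubOne q (a + 1) 1 r := by
  rw [← prodPowSubOne_succ', prodPowSubOne_succ, one_mul]

theorem prodPowSubOne_two_mul_succ [CommRing K] (q : K) (a r : ℕ) :
    prodPowSubOne q a 1 (2 * (r + 1)) =
      (q ^ a - 1) * prodPowSubOne q (a + 1) 1 (2 * r) * (q ^ (a + 1 + 2 * r) - 1) := by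
  rw [show 2 * (r + 1) = 2 * r + 1 + 1 by ring, prodPowSubOne_succ', prodPowSubOne_succ]
  ring_nf

theorem prodPowSubOne_two_mul [CommRing K] (q : K) (a r : ℕ) :
    prodPowSubOne q a 1 (2 * r) = prodPowSubOne q a 2 r * prodPowSubOne q (a + 1) 2 r := by
  induction r with
  | zero => simp [prodPowSubOne]
  | succ s ih =>
    rw [show 2 * (s + 1) = 2 * s + 1 + 1 by ring, prodPowSubOne_succ, prodPowSubOne_succ, ih,
      prodPowSubOne_succ, prodPowSubOne_succ]
    ring_nf

theorem prodPowSubOne_eq_pow_mul_qPoch [Field K] {q : K} (hq : q ≠ 0) (a c r : ℕ) :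
    prodPowSubOne q a c r = q ^ (r * a + c * r.choose 2) * qPoch (q⁻¹ ^ a) (q⁻¹ ^ c) r := by
  have hsum : ∑ k ∈ range r, (a + c * k) = r * a + c * r.choose 2 := by
    rw [sum_add_distrib, ← mul_sum, sum_range_id, ← Nat.choose_two_right, sum_const, card_range,
      smul_eq_mul]
  rw [prodPowSubOne, qPoch, ← hsum, ← prod_pow_eq_pow_sum, ← prod_mul_distrib]
  refine prod_congr rfl fun k _ => ?_
  rw [inv_pow, inv_pow, inv_pow, ← pow_mul, ← mul_inv, ← pow_add, mul_sub, mul_one,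
    mul_inv_cancel₀ (pow_ne_zero _ hq)]

theorem prodPowSubOne_ne_zero {q : ℚ} (hq : 1 < q) {a : ℕ} (ha : 0 < a) (c r : ℕ) :
    prodPowSubOne q a c r ≠ 0 :=
  prod_ne_zero_iff.2 fun _ _ => sub_ne_zero.2 (one_lt_pow₀ hq (by omega)).ne'

theorem qBinom_mul_qPoch_mul_pow_eq {q : ℚ} (hq : 1 < q) {δ : ℕ} (hδ : δ = 0 ∨ δ = 1)
    (i r : ℕ) :
    qBinom (q⁻¹ ^ 2) (i + r) i * qPoch (q⁻¹ ^ (2 * (i + δ) + 1)) (q⁻¹ ^ 2) r *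
        q ^ ((2 * (i + r) + δ).choose 2 - (2 * i + δ).choose 2) =
      q ^ (2 * r.choose 2) * prodPowSubOne q (2 * i + δ + 1) 1 (2 * r) /
        prodPowSubOne q 2 2 r := by
  have hq0 : q ≠ 0 := (zero_lt_one.trans hq).ne'
  have hqFact (m : ℕ) :
      q ^ (m * 2 + 2 * m.choose 2) * qFact (q⁻¹ ^ 2) m = prodPowSubOne q 2 2 m := by
    rw [prodPowSubOne_eq_pow_mul_qPoch hq0, qPoch_self]
  have hFi : qFact (q⁻¹ ^ 2) i ≠ 0 :=
    right_ne_zero_of_mul ((hqFact i).trans_ne (prodPowSubOne_ne_zero hq two_pos 2 i))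
  have hsplit : prodPowSubOne q (2 * i + δ + 1) 1 (2 * r) =
      prodPowSubOne q (2 * (i + 1)) 2 r * prodPowSubOne q (2 * (i + δ) + 1) 2 r := by
    rw [prodPowSubOne_two_mul]
    rcases hδ with rfl | rfl
    · rw [mul_comm]
      rfl
    · rfl
  have hexp : (2 * (i + r) + δ).choose 2 - (2 * i + δ).choose 2 =
      (2 * (2 * i + δ) + 1) * r + 4 * r.choose 2 := by
    rw [show 2 * (i + r) + δ = 2 * i + δ + 2 * r by ring, Nat.add_two_mul_choose_two]
    omega
  rw [hsplit, qBinom_add_left hFi, ← pow_mul, prodPowSubOne_eq_pow_mul_qPoch hq0 (2 * (i + 1)),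
    prodPowSubOne_eq_pow_mul_qPoch hq0 (2 * (i + δ) + 1), ← hqFact, hexp]
  field_simp
  ring

end QProducts

section AltRankCount

variable {F : Type*} [Field F] [Fintype F]

variable (F) in
def altRankCount (N k : ℕ) : ℕ :=
  #{x : Matrix (Fin N) (Fin N) F | x.IsAlt ∧ x.rank = k}

theorem altRankCount_zero (N : ℕ) : altRankCount F N 0 = 1 := by
  rw [altRankCount, card_eq_one]
  refine ⟨0, eq_singleton_iff_unique_mem.2
    ⟨?_, fun x hx => rank_eq_zero_iff.1 (mem_filter.1 hx).2.2⟩⟩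
  exact mem_filter.2 ⟨mem_univ _, ⟨by simp, by simp⟩, rank_zero⟩

theorem altRankCount_eq_zero_of_lt {N k : ℕ} (h : N < k) : altRankCount F N k = 0 := by
  rw [altRankCount, card_eq_zero, filter_eq_empty_iff]
  intro x _ hx
  have := rank_le_width x
  omega

theorem altRankCount_succ_add_two (N k : ℕ) :
    altRankCount F (N + 1) (k + 2) =
      Fintype.card F ^ (k + 2) * altRankCount F N (k + 2) +
      (Fintype.card F ^ N - Fintype.card F ^ k) * altRankCount F N k := by
  rw [altRankCount, ← card_isAlt_rank_reindex finSumFinEquiv, card_isAlt_rank_sumFinOne,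
    sum_congr rfl fun y hy => (mem_filter.1 hy).2.card_rank_border_eq_add_two k,
    sum_add_distrib, ← sum_filter, ← sum_filter, filter_filter, filter_filter, sum_const,
    sum_const, smul_eq_mul, smul_eq_mul, Fintype.card_fin, altRankCount, altRankCount,
    mul_comm, mul_comm (#_)]

theorem cast_altRankCount_succ_add_two {N k : ℕ} (h : k ≤ N) :
    (altRankCount F (N + 1) (k + 2) : ℚ) =
      (Fintype.card F : ℚ) ^ (k + 2) * altRankCount F N (k + 2) +
      ((Fintype.card F : ℚ) ^ N - (Fintype.card F : ℚ) ^ k) * altRankCount F N k := by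
  rw [altRankCount_succ_add_two, Nat.cast_add, Nat.cast_mul, Nat.cast_mul,
    Nat.cast_sub (Nat.pow_le_pow_right Fintype.card_pos h)]
  push_cast
  rfl

-- The size is written `M + 2 * r` to avoid truncated subtraction; `2 * r.choose 2 = r * (r - 1)`.
theorem altRankCount_mul_prodPowSubOne (M r : ℕ) :
    (altRankCount F (M + 2 * r) (2 * r) : ℚ) * prodPowSubOne (Fintype.card F : ℚ) 2 2 r =
      (Fintype.card F : ℚ) ^ (2 * r.choose 2) *
        prodPowSubOne (Fintype.card F : ℚ) (M + 1) 1 (2 * r) := by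
  set q : ℚ := (Fintype.card F : ℚ)
  induction r generalizing M with
  | zero => simp [altRankCount_zero, prodPowSubOne]
  | succ s ih =>
    rw [prodPowSubOne_succ, prodPowSubOne_two_mul_succ, Nat.succ_choose_two]
    induction M with
    | zero =>
      have h := cast_altRankCount_succ_add_two (F := F) (N := 2 * s + 1) (k := 2 * s) (by omega)
      rw [altRankCount_eq_zero_of_lt (N := 2 * s + 1) (k := 2 * s + 2) (by omega),
        Nat.cast_zero] at h
      have h1 := ih 1
      rw [show 0 + 2 * (s + 1) = 2 * s + 1 + 1 by ring, show 2 * (s + 1) = 2 * s + 2 by ring, h,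
        zero_add]
      rw [show 1 + 2 * s = 2 * s + 1 by ring] at h1
      linear_combination (q ^ (2 * s + 1) - q ^ (2 * s)) * (q ^ (2 + 2 * s) - 1) * h1
    | succ M' ihM =>
      have h := cast_altRankCount_succ_add_two (F := F) (N := M' + 2 * s + 2) (k := 2 * s)
        (by omega)
      have h1 := ih (M' + 2)
      rw [show M' + 1 + 2 * (s + 1) = M' + 2 * s + 2 + 1 by ring,
        show 2 * (s + 1) = 2 * s + 2 by ring, h]
      rw [show M' + 2 + 2 * s = M' + 2 * s + 2 by ring] at h1
      rw [show M' + 2 * (s + 1) = M' + 2 * s + 2 by ring,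
        show 2 * (s + 1) = 2 * s + 2 by ring, show M' + 1 + 1 = M' + 2 by ring] at ihM
      linear_combination q ^ (2 * s + 2) * ihM +
        (q ^ (M' + 2 * s + 2) - q ^ (2 * s)) * (q ^ (2 + 2 * s) - 1) * h1 +
        q ^ (2 * s + 2) * q ^ (2 * (s.choose 2 + s)) * (q ^ (M' + 1) - 1) *
          prodPowSubOne_mul_pow_add_sub_one q (M' + 2) (2 * s)

end AltRankCount

theorem card_alternating_matrices_of_rank_general
    (F : Type*) [Field F] [Fintype F] (q : ℕ) (hq : q = Fintype.card F)
    (n δ i : ℕ) (hδ : δ = 0 ∨ δ = 1) (hi : i ≤ n) :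
    ((Finset.univ.filter
        (fun x : Matrix (Fin (2 * n + δ)) (Fin (2 * n + δ)) F =>
          x.transpose = -x ∧ (∀ j, x j j = 0) ∧ x.rank = 2 * (n - i))).card : ℚ)
      = qBinom (((q : ℚ))⁻¹ ^ 2) n i *
          qPoch (((q : ℚ))⁻¹ ^ (2 * (i + δ) + 1)) (((q : ℚ))⁻¹ ^ 2) (n - i) *
          (q : ℚ) ^ ((2 * n + δ).choose 2 - (2 * i + δ).choose 2) := by
  obtain ⟨r, rfl⟩ := Nat.exists_eq_add_of_le hi
  have hcard : #{x : Matrix (Fin (2 * (i + r) + δ)) (Fin (2 * (i + r) + δ)) F |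
      xᵀ = -x ∧ (∀ j, x j j = 0) ∧ x.rank = 2 * (i + r - i)} =
      altRankCount F (2 * i + δ + 2 * r) (2 * r) := by
    rw [altRankCount, Nat.add_sub_cancel_left, show 2 * (i + r) + δ = 2 * i + δ + 2 * r by ring]
    simp only [IsAlt, and_assoc]
  have hq1 : 1 < (Fintype.card F : ℚ) := by exact_mod_cast Fintype.one_lt_card
  rw [hcard, hq, Nat.add_sub_cancel_left, qBinom_mul_qPoch_mul_pow_eq hq1 hδ,
    eq_div_iff (prodPowSubOne_ne_zero hq1 two_pos 2 r), altRankCount_mul_prodPowSubOne]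

theorem card_alternating_matrices_of_rank
    (F : Type*) [Field F] [Fintype F] (q : ℕ) (hq : q = Fintype.card F)
    (n δ i : ℕ) (hn : 1 ≤ n) (hδ : δ = 0 ∨ δ = 1) (hi : i ≤ n) :
    ((Finset.univ.filter
        (fun x : Matrix (Fin (2 * n + δ)) (Fin (2 * n + δ)) F =>
          x.transpose = -x ∧ (∀ j, x j j = 0) ∧ x.rank = 2 * (n - i))).card : ℚ)
      = qBinom (((q : ℚ))⁻¹ ^ 2) n i *
          qPoch (((q : ℚ))⁻¹ ^ (2 * (i + δ) + 1)) (((q : ℚ))⁻¹ ^ 2) (n - i) *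
          (q : ℚ) ^ ((2 * n + δ).choose 2 - (2 * i + δ).choose 2) :=
  card_alternating_matrices_of_rank_general F q hq n δ i hδ hi

end
end
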